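/- Let G be the d-dimensional grid graph with side lengths (n₁, …, n_d), let E and F be two distinct vertices, and let V₁ = {U : d_G(U,E) ≤ d_G(U,F)}. Let G₁ be the subgraph of G induced on V₁. Then the metric dimension of G₁ is at most d. Moreover, after relabeling coordinates so that |x_E^(1) − x_F^(1)| is maximal among all coordinates and reflecting so that x_E^(i) ≤ x_F^(i) for all i, the d corners O₁ = (1,…,1) and O_j (obtained from O₁ by replacing the j-th coordinate by n_j), j = 2,…,d, all lie in V₁ and form a resolving set of G₁, with d_{G₁}(X, O_j) = d_G(X, O_j) for every X ∈ V₁. -/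

import Mathlib

/-- A set `R` of vertices resolves the graph `H` if every pair of distinct
vertices is distinguished by some vertex of `R`. -/
def resolves {V : Type*} (H : SimpleGraph V) (R : Set V) : Prop :=
  ∀ a b : V, a ≠ b → ∃ x ∈ R, H.dist a x ≠ H.dist b x

/-- The metric dimension: the least cardinality of a (finite) resolving set. -/
noncomputable def metricDim {V : Type*} (H : SimpleGraph V) : ℕ :=
  sInf {k | ∃ R : Finset V, R.card = k ∧ resolves H (R : Set V)}

/-- The `d`-dimensional grid graph with side lengths `n 0, …, n (d-1)`: vertices are
tuples `(x 0, …, x (d-1))` with `x i ∈ Fin (n i)` (representing the coordinate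
`x i + 1 ∈ {1, …, n i}`), two vertices being adjacent when they differ by exactly 1
in exactly one coordinate, i.e. when their ℓ¹ distance is 1. -/
def gridGraph {d : ℕ} (n : Fin d → ℕ) : SimpleGraph (∀ i, Fin (n i)) where
  Adj x y := (∑ i, |((x i : ℕ) : ℤ) - ((y i : ℕ) : ℤ)|) = 1
  symm := by
    constructor
    intro x y h
    beta_reduce at h ⊢
    rw [show (∑ i, |((y i : ℕ) : ℤ) - ((x i : ℕ) : ℤ)|)
        = ∑ i, |((x i : ℕ) : ℤ) - ((y i : ℕ) : ℤ)| from
      Finset.sum_congr rfl fun i _ => abs_sub_comm _ _]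
    exact h
  loopless := by constructor; intro x h; simp at h

/-- The corner `O j` of the grid: `O 0 = (1,…,1)` (all `Fin`-values 0) and, for
`j ≠ 0`, `O j` is obtained from `O 0` by replacing the `j`-th coordinate by `n j`
(the `Fin`-value `n j − 1`). -/
def gridCorner {d : ℕ} (n : Fin d → ℕ) (hn : ∀ i, 0 < n i) (j : Fin d) :
    ∀ i, Fin (n i) := fun i =>
  if (i : ℕ) = (j : ℕ) ∧ (j : ℕ) ≠ 0 then ⟨n i - 1, Nat.sub_lt (hn i) one_pos⟩
  else ⟨0, hn i⟩

/-!
In the grid, graph distance is ℓ¹ distance. Let `c` be the corner lying, in every coordinate, on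
the side of `E` away from `F`, and let `j₀` maximise `|E j - F j|`. Then
`d(c, F) - d(c, E) = d(E, F)`, and moving coordinate `j ≠ j₀` of `c` anywhere lowers this margin
by at most `2 |E j - F j| ≤ |E j - F j| + |E j₀ - F j₀|`; so `c` and the `d - 1` corners obtained
by flipping one coordinate `j ≠ j₀` of `c` lie in `V₁`. From every vertex of `V₁` other than such
a corner there is a step inside `V₁` towards it (moving a coordinate towards `c` never leaves
`V₁`), so distances to the corners in `G₁` are ℓ¹ distances. Finally, the distances from `x` to
the corner flipped at `j` and to `c` differ by `(n j - 1) - 2 |x j - c j|`, which recovers `x j`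
for `j ≠ j₀`; the distance to `c` then recovers `x j₀`.
-/

theorem SimpleGraph.dist_eq_of_forall_exists_adj_lt {V : Type*} (G : SimpleGraph V) {t : V}
    {φ : V → ℕ} (ht : φ t = 0) (hlip : ∀ ⦃x y⦄, G.Adj x y → φ x ≤ φ y + 1)
    (hdesc : ∀ x, x ≠ t → ∃ y, G.Adj x y ∧ φ y < φ x) (x : V) : G.dist x t = φ x := by
  have le_length : ∀ {x} (w : G.Walk x t), φ x ≤ w.length := by
    intro x w
    induction w with
    | nil => simp [ht]
    | cons h _ ih =>
      rw [SimpleGraph.Walk.length_cons]; exact (hlip h).trans (by have := ih ht hdesc; omega)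
  have exists_walk : ∀ k x, φ x ≤ k → ∃ w : G.Walk x t, w.length ≤ φ x := by
    intro k
    induction k with
    | zero =>
      intro x hx
      by_cases hxt : x = t
      · subst hxt; exact ⟨.nil, by simp⟩
      · obtain ⟨y, -, hy⟩ := hdesc x hxt; omega
    | succ k ih =>
      intro x hx
      by_cases hxt : x = t
      · subst hxt; exact ⟨.nil, by simp⟩
      · obtain ⟨y, hxy, hy⟩ := hdesc x hxt
        obtain ⟨w, hw⟩ := ih y (by omega)
        exact ⟨.cons hxy w, by rw [SimpleGraph.Walk.length_cons]; omega⟩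
  obtain ⟨w, hw⟩ := exists_walk _ x le_rfl
  obtain ⟨p, hp⟩ := w.reachable.exists_walk_length_eq_dist
  exact le_antisymm ((SimpleGraph.dist_le w).trans hw) (hp ▸ le_length p)

theorem resolves.mono {V : Type*} {H : SimpleGraph V} {R R' : Set V} (h : resolves H R)
    (hRR' : R ⊆ R') : resolves H R' := fun a b hab =>
  let ⟨x, hx, hd⟩ := h a b hab; ⟨x, hRR' hx, hd⟩

theorem metricDim_le_card {V : Type*} {H : SimpleGraph V} {R : Finset V}
    (h : resolves H R) : metricDim H ≤ R.card :=
  Nat.sInf_le ⟨R, rfl, h⟩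

theorem Nat.cast_dist (a b : ℕ) : (Nat.dist a b : ℤ) = |(a : ℤ) - b| := by
  rcases le_total a b with h | h
  · rw [abs_of_nonpos (by omega), Nat.dist_eq_sub_of_le h]; omega
  · rw [abs_of_nonneg (by omega), Nat.dist_eq_sub_of_le_right h]; omega

namespace Fin

variable {m : ℕ}

theorem exists_dist_eq_one_dist_lt (u t : Fin m) (h : u ≠ t) :
    ∃ v : Fin m, Nat.dist v u = 1 ∧ Nat.dist v t < Nat.dist u t := by
  have h' : (u : ℕ) ≠ t := Fin.val_ne_of_ne h
  rcases Nat.lt_or_gt_of_ne h' with hlt | hgt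
  · exact ⟨⟨u + 1, by omega⟩, by simp only [Nat.dist]; omega, by simp only [Nat.dist]; omega⟩
  · exact ⟨⟨u - 1, by omega⟩, by simp only [Nat.dist]; omega, by simp only [Nat.dist]; omega⟩

theorem dist_add_dist_rev {c : Fin m} (hc : (c : ℕ) = 0 ∨ (c : ℕ) + 1 = m) (u : Fin m) :
    Nat.dist u c + Nat.dist u c.rev + 1 = m := by
  have := u.isLt; simp only [Nat.dist, Fin.val_rev]; omega

theorem eq_of_dist_eq {c : Fin m} (hc : (c : ℕ) = 0 ∨ (c : ℕ) + 1 = m) {u w : Fin m}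
    (h : Nat.dist u c = Nat.dist w c) : u = w := by
  have := u.isLt; have := w.isLt; simp only [Nat.dist] at h; ext; omega

end Fin

namespace GridGraph

open Finset

variable {d : ℕ} {n : Fin d → ℕ}

def l1Dist (x y : ∀ i, Fin (n i)) : ℕ := ∑ i, Nat.dist (x i) (y i)

theorem l1Dist_self (x : ∀ i, Fin (n i)) : l1Dist x x = 0 := by simp [l1Dist]

theorem l1Dist_comm (x y : ∀ i, Fin (n i)) : l1Dist x y = l1Dist y x :=
  sum_congr rfl fun _ _ => Nat.dist_comm _ _

theorem l1Dist_triangle (x y z : ∀ i, Fin (n i)) : l1Dist x z ≤ l1Dist x y + l1Dist y z := by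
  rw [l1Dist, l1Dist, l1Dist, ← sum_add_distrib]
  exact sum_le_sum fun i _ => Nat.dist.triangle_inequality _ _ _

theorem l1Dist_eq_dist_add_sum_erase (x y : ∀ i, Fin (n i)) (j : Fin d) :
    l1Dist x y = Nat.dist (x j) (y j) + ∑ i ∈ univ.erase j, Nat.dist (x i) (y i) :=
  (add_sum_erase _ _ (mem_univ j)).symm

theorem l1Dist_update_add (x y : ∀ i, Fin (n i)) (j : Fin d) (v : Fin (n j)) :
    l1Dist (Function.update x j v) y + Nat.dist (x j) (y j) = l1Dist x y + Nat.dist v (y j) := by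
  have hrest : ∑ i ∈ univ.erase j, Nat.dist (Function.update x j v i) (y i)
      = ∑ i ∈ univ.erase j, Nat.dist (x i) (y i) :=
    sum_congr rfl fun i hi => by rw [Function.update_of_ne (ne_of_mem_erase hi)]
  rw [l1Dist_eq_dist_add_sum_erase _ _ j, l1Dist_eq_dist_add_sum_erase x _ j, hrest,
    Function.update_self]
  omega

theorem gridGraph_adj_iff {x y : ∀ i, Fin (n i)} : (gridGraph n).Adj x y ↔ l1Dist x y = 1 := by
  change ∑ i, |((x i : ℕ) : ℤ) - ((y i : ℕ) : ℤ)| = 1 ↔ _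
  simp only [← Nat.cast_dist, l1Dist]
  exact_mod_cast Iff.rfl

theorem l1Dist_le_of_adj {x y : ∀ i, Fin (n i)} (h : (gridGraph n).Adj x y)
    (t : ∀ i, Fin (n i)) : l1Dist x t ≤ l1Dist y t + 1 := by
  have := l1Dist_triangle x y t
  rw [gridGraph_adj_iff.mp h] at this
  omega

theorem exists_adj_update_lt (x t : ∀ i, Fin (n i)) {j : Fin d} (h : x j ≠ t j) :
    ∃ v : Fin (n j), Nat.dist v (x j) = 1 ∧ Nat.dist v (t j) < Nat.dist (x j) (t j) ∧
      (gridGraph n).Adj x (Function.update x j v) ∧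
      l1Dist (Function.update x j v) t < l1Dist x t := by
  obtain ⟨v, hvx, hvt⟩ := Fin.exists_dist_eq_one_dist_lt (x j) (t j) h
  refine ⟨v, hvx, hvt, ?_, ?_⟩
  · have := l1Dist_update_add x x j v
    rw [Nat.dist_self, l1Dist_self] at this
    rw [gridGraph_adj_iff, l1Dist_comm]
    omega
  · have := l1Dist_update_add x t j v
    omega

theorem gridGraph_dist (x y : ∀ i, Fin (n i)) : (gridGraph n).dist x y = l1Dist x y := by
  refine SimpleGraph.dist_eq_of_forall_exists_adj_lt _ (φ := (l1Dist · y)) (l1Dist_self y)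
    (fun _ _ h => l1Dist_le_of_adj h y) (fun z hz => ?_) x
  obtain ⟨j, hj⟩ := Function.ne_iff.mp hz
  obtain ⟨v, -, -, hadj, hlt⟩ := exists_adj_update_lt z y hj
  exact ⟨_, hadj, hlt⟩

def voronoiCell (E F : ∀ i, Fin (n i)) : Set (∀ i, Fin (n i)) :=
  {U | (gridGraph n).dist U E ≤ (gridGraph n).dist U F}

theorem mem_voronoiCell {E F U : ∀ i, Fin (n i)} :
    U ∈ voronoiCell E F ↔ l1Dist U E ≤ l1Dist U F := by
  simp only [voronoiCell, Set.mem_ofPred_eq, gridGraph_dist]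

def cornerFamily (c : ∀ i, Fin (n i)) (j₀ j : Fin d) : ∀ i, Fin (n i) :=
  if j = j₀ then c else Function.update c j (c j).rev

section Corners

variable {c : ∀ i, Fin (n i)} {j₀ : Fin d}

theorem cornerFamily_self : cornerFamily c j₀ j₀ = c := if_pos rfl

theorem cornerFamily_of_ne {j : Fin d} (hj : j ≠ j₀) :
    cornerFamily c j₀ j = Function.update c j (c j).rev := if_neg hj

theorem cornerFamily_apply_of_ne {i j : Fin d} (hij : i ≠ j) : cornerFamily c j₀ j i = c i := by
  unfold cornerFamily
  split_ifs
  · rfl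
  · exact Function.update_of_ne hij _ _

variable {E F : ∀ i, Fin (n i)}

/-- The normalisation of the paper, up to relabelling and reflecting coordinates: `E` lies between
`c` and `F` in every coordinate, and `E` and `F` are farthest apart in coordinate `j₀`. -/
structure IsAnchor (E F c : ∀ i, Fin (n i)) (j₀ : Fin d) : Prop where
  between : ∀ i, Nat.dist (c i) (F i) = Nat.dist (c i) (E i) + Nat.dist (E i) (F i)
  maxGap : ∀ i, Nat.dist (E i) (F i) ≤ Nat.dist (E j₀) (F j₀)

theorem l1Dist_right_eq_add
    (hcEF : ∀ i, Nat.dist (c i) (F i) = Nat.dist (c i) (E i) + Nat.dist (E i) (F i)) :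
    l1Dist c F = l1Dist c E + l1Dist E F := by
  simp only [l1Dist, ← sum_add_distrib, hcEF]

theorem two_mul_dist_le_l1Dist (hmax : ∀ i, Nat.dist (E i) (F i) ≤ Nat.dist (E j₀) (F j₀))
    {j : Fin d} (hj : j ≠ j₀) : 2 * Nat.dist (E j) (F j) ≤ l1Dist E F := by
  have := single_le_sum (f := fun i => Nat.dist (E i) (F i)) (fun _ _ => Nat.zero_le _)
    (mem_erase.mpr ⟨Ne.symm hj, mem_univ j₀⟩)
  have := hmax j
  rw [l1Dist_eq_dist_add_sum_erase E F j]
  omega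

theorem IsAnchor.update_mem_voronoiCell (h : IsAnchor E F c j₀) {j : Fin d} (hj : j ≠ j₀)
    (v : Fin (n j)) : Function.update c j v ∈ voronoiCell E F := by
  have hE := l1Dist_update_add c E j v
  have hF := l1Dist_update_add c F j v
  have := l1Dist_right_eq_add h.between
  have := two_mul_dist_le_l1Dist h.maxGap hj
  have := Nat.dist.triangle_inequality v (F j) (E j)
  have := Nat.dist_comm (F j) (E j)
  have := h.between j
  rw [mem_voronoiCell]
  omega

theorem IsAnchor.cornerFamily_mem_voronoiCell (h : IsAnchor E F c j₀) (j : Fin d) :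
    cornerFamily c j₀ j ∈ voronoiCell E F := by
  by_cases hj : j = j₀
  · rw [hj, cornerFamily_self, mem_voronoiCell, l1Dist_right_eq_add h.between]
    omega
  · rw [cornerFamily_of_ne hj]
    exact h.update_mem_voronoiCell hj _

theorem IsAnchor.exists_adj_mem_voronoiCell_lt (h : IsAnchor E F c j₀) {j : Fin d}
    {x : ∀ i, Fin (n i)} (hx : x ∈ voronoiCell E F) (hxK : x ≠ cornerFamily c j₀ j) :
    ∃ y ∈ voronoiCell E F, (gridGraph n).Adj x y ∧
      l1Dist y (cornerFamily c j₀ j) < l1Dist x (cornerFamily c j₀ j) := by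
  by_cases htoc : ∃ i, x i ≠ cornerFamily c j₀ j i ∧ cornerFamily c j₀ j i = c i
  · obtain ⟨i, hxi, hKi⟩ := htoc
    obtain ⟨v, hvx, hvK, hadj, hlt⟩ := exists_adj_update_lt x _ hxi
    refine ⟨_, ?_, hadj, hlt⟩
    have hstep :
        Nat.dist v (E i) + Nat.dist (x i) (F i) ≤ Nat.dist (x i) (E i) + Nat.dist v (F i) := by
      have := h.between i
      rw [hKi] at hvK
      simp only [Nat.dist] at *
      omega
    have hE := l1Dist_update_add x E i v
    have hF := l1Dist_update_add x F i v
    rw [mem_voronoiCell] at hx ⊢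
    omega
  · push Not at htoc
    obtain ⟨i, hi⟩ := Function.ne_iff.mp hxK
    have hij : i = j := by
      by_contra hij
      exact htoc i hi (cornerFamily_apply_of_ne hij)
    subst hij
    have hj : i ≠ j₀ := by
      rintro rfl
      exact htoc i hi (by rw [cornerFamily_self])
    have hxc : x = Function.update c i (x i) := by
      funext k
      by_cases hk : k = i
      · subst hk; simp
      · rw [Function.update_of_ne hk]
        by_contra hxk
        exact htoc k (by rwa [cornerFamily_apply_of_ne hk]) (cornerFamily_apply_of_ne hk)
    obtain ⟨v, -, -, hadj, hlt⟩ := exists_adj_update_lt x _ hi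
    refine ⟨_, ?_, hadj, hlt⟩
    rw [hxc, Function.update_idem]
    exact h.update_mem_voronoiCell hj v

theorem IsAnchor.dist_induce_voronoiCell (h : IsAnchor E F c j₀) (X : voronoiCell E F)
    (j : Fin d) (hj : cornerFamily c j₀ j ∈ voronoiCell E F) :
    ((gridGraph n).induce (voronoiCell E F)).dist X ⟨_, hj⟩ =
      l1Dist X.1 (cornerFamily c j₀ j) := by
  refine SimpleGraph.dist_eq_of_forall_exists_adj_lt _
    (φ := fun y : voronoiCell E F => l1Dist y.1 (cornerFamily c j₀ j))
    (l1Dist_self _) (fun _ _ hxy => l1Dist_le_of_adj hxy _) (fun x hx => ?_) X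
  obtain ⟨y, hy, hadj, hlt⟩ := h.exists_adj_mem_voronoiCell_lt x.2 (fun hxK => hx (Subtype.ext hxK))
  exact ⟨⟨y, hy⟩, hadj, hlt⟩

theorem eq_of_forall_l1Dist_cornerFamily_eq (hcorner : ∀ i, (c i : ℕ) = 0 ∨ (c i : ℕ) + 1 = n i)
    {a b : ∀ i, Fin (n i)}
    (h : ∀ j, l1Dist a (cornerFamily c j₀ j) = l1Dist b (cornerFamily c j₀ j)) : a = b := by
  have h₀ := h j₀
  rw [cornerFamily_self] at h₀
  have hoff : ∀ j ≠ j₀, a j = b j := by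
    intro j hj
    have hj' := h j
    rw [cornerFamily_of_ne hj] at hj'
    have ha := l1Dist_update_add c a j (c j).rev
    have hb := l1Dist_update_add c b j (c j).rev
    rw [l1Dist_comm _ a, l1Dist_comm c a, Nat.dist_comm (c j), Nat.dist_comm (c j).rev] at ha
    rw [l1Dist_comm _ b, l1Dist_comm c b, Nat.dist_comm (c j), Nat.dist_comm (c j).rev] at hb
    have ha' := Fin.dist_add_dist_rev (hcorner j) (a j)
    have hb' := Fin.dist_add_dist_rev (hcorner j) (b j)
    exact Fin.eq_of_dist_eq (hcorner j) (by omega)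
  have hb : b = Function.update a j₀ (b j₀) := by
    funext k
    by_cases hk : k = j₀
    · subst hk; simp
    · rw [Function.update_of_ne hk, hoff k hk]
  have hj₀ : a j₀ = b j₀ := by
    have hab := l1Dist_update_add a c j₀ (b j₀)
    rw [← hb] at hab
    exact Fin.eq_of_dist_eq (hcorner j₀) (by omega)
  rw [hb, ← hj₀, Function.update_eq_self]

theorem IsAnchor.resolves_induce_voronoiCell (h : IsAnchor E F c j₀)
    (hcorner : ∀ i, (c i : ℕ) = 0 ∨ (c i : ℕ) + 1 = n i) :
    resolves ((gridGraph n).induce (voronoiCell E F))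
      {x | ∃ j, (x : ∀ i, Fin (n i)) = cornerFamily c j₀ j} := by
  intro a b hab
  by_contra! hdist
  refine hab (Subtype.ext (eq_of_forall_l1Dist_cornerFamily_eq (j₀ := j₀) hcorner fun j => ?_))
  have hj := h.cornerFamily_mem_voronoiCell j
  rw [← h.dist_induce_voronoiCell a j hj, ← h.dist_induce_voronoiCell b j hj]
  exact hdist _ ⟨j, rfl⟩

end Corners

theorem metricDim_induce_voronoiCell_le (hd : 0 < d) (E F : ∀ i, Fin (n i)) :
    metricDim ((gridGraph n).induce (voronoiCell E F)) ≤ d := by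
  obtain ⟨j₀, -, hmax⟩ := exists_max_image univ (fun i => Nat.dist (E i) (F i))
    ⟨⟨0, hd⟩, mem_univ _⟩
  let c : ∀ i, Fin (n i) := fun i =>
    if (E i : ℕ) ≤ F i then ⟨0, (E i).pos⟩ else ⟨n i - 1, Nat.sub_lt (E i).pos one_pos⟩
  have hanchor : IsAnchor E F c j₀ := by
    refine ⟨fun i => ?_, fun i => hmax i (mem_univ i)⟩
    have := (E i).isLt
    have := (F i).isLt
    simp only [c]
    split_ifs <;> simp only [Nat.dist] <;> omega
  have hcorner : ∀ i, (c i : ℕ) = 0 ∨ (c i : ℕ) + 1 = n i := by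
    intro i
    simp only [c]
    split_ifs
    · exact Or.inl rfl
    · exact Or.inr (Nat.sub_add_cancel (E i).pos)
  let R : Finset (voronoiCell E F) :=
    univ.image fun j => ⟨_, hanchor.cornerFamily_mem_voronoiCell j⟩
  calc metricDim ((gridGraph n).induce (voronoiCell E F))
      ≤ R.card := by
        refine metricDim_le_card ((hanchor.resolves_induce_voronoiCell hcorner).mono ?_)
        rintro x ⟨j, hj⟩
        exact mem_image.mpr ⟨j, mem_univ j, Subtype.ext hj.symm⟩
    _ ≤ d := card_image_le.trans_eq (card_fin d)

theorem gridCorner_eq_cornerFamily (hd : 0 < d) (hn : ∀ i, 0 < n i) :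
    gridCorner n hn = cornerFamily (fun i => ⟨0, hn i⟩) ⟨0, hd⟩ := by
  funext j i
  by_cases hj : j = ⟨0, hd⟩
  · subst hj
    simp [gridCorner, cornerFamily_self]
  · have hj' : (j : ℕ) ≠ 0 := fun h => hj (Fin.ext h)
    by_cases hij : i = j
    · subst hij
      simp [gridCorner, cornerFamily_of_ne hj, hj', Fin.rev]
    · have hij' : (i : ℕ) ≠ j := fun h => hij (Fin.ext h)
      simp [gridCorner, cornerFamily_apply_of_ne hij, hij']

end GridGraph

open GridGraph

theorem stmt_10_general {d : ℕ} (hd : 0 < d) (n : Fin d → ℕ) (hn : ∀ i, 0 < n i)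
    (E F : ∀ i, Fin (n i)) :
    metricDim ((gridGraph n).induce
        {U | (gridGraph n).dist U E ≤ (gridGraph n).dist U F}) ≤ d ∧
    ((∀ i, (E i : ℕ) ≤ (F i : ℕ)) →
      (∀ i, (F i : ℕ) - (E i : ℕ) ≤ (F ⟨0, hd⟩ : ℕ) - (E ⟨0, hd⟩ : ℕ)) →
      (∀ j, gridCorner n hn j ∈
          {U | (gridGraph n).dist U E ≤ (gridGraph n).dist U F}) ∧
      resolves ((gridGraph n).induce
          {U | (gridGraph n).dist U E ≤ (gridGraph n).dist U F})
        {x : {U | (gridGraph n).dist U E ≤ (gridGraph n).dist U F} |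
          ∃ j, (x : ∀ i, Fin (n i)) = gridCorner n hn j} ∧
      (∀ (X : {U | (gridGraph n).dist U E ≤ (gridGraph n).dist U F}) (j : Fin d)
          (hj : gridCorner n hn j ∈
            {U | (gridGraph n).dist U E ≤ (gridGraph n).dist U F}),
        ((gridGraph n).induce
            {U | (gridGraph n).dist U E ≤ (gridGraph n).dist U F}).dist
            X ⟨gridCorner n hn j, hj⟩ =
          (gridGraph n).dist (X : ∀ i, Fin (n i)) (gridCorner n hn j))) := by
  refine ⟨metricDim_induce_voronoiCell_le hd E F, fun hEF hgap => ?_⟩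
  have hanchor : IsAnchor E F (fun i => ⟨0, hn i⟩) ⟨0, hd⟩ := by
    refine ⟨fun i => ?_, fun i => ?_⟩ <;>
    · have := hEF i
      have := hEF ⟨0, hd⟩
      have := hgap i
      simp only [Nat.dist]
      omega
  rw [gridCorner_eq_cornerFamily hd hn]
  refine ⟨hanchor.cornerFamily_mem_voronoiCell, hanchor.resolves_induce_voronoiCell
    fun _ => Or.inl rfl, fun X j hj => ?_⟩
  exact (hanchor.dist_induce_voronoiCell X j hj).trans (gridGraph_dist _ _).symm

/-- Lemma 3: for the `d`-dimensional grid `G`, vertices `E ≠ F`, and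
`V₁ = {U : d_G(U,E) ≤ d_G(U,F)}` with induced subgraph `G₁`, we have `β(G₁) ≤ d`.
Moreover, when the coordinates are labelled so that the gap along the first
coordinate is maximal (`∀ i, x_F⁽ⁱ⁾ − x_E⁽ⁱ⁾ ≤ x_F⁽¹⁾ − x_E⁽¹⁾`) and reflected so
that `x_E⁽ⁱ⁾ ≤ x_F⁽ⁱ⁾` for all `i`, the `d` corners `O j` all lie in `V₁`, they form
a resolving set of `G₁`, and `d_{G₁}(X, O j) = d_G(X, O j)` for every `X ∈ V₁`. -/
theorem stmt_10 {d : ℕ} (hd : 0 < d) (n : Fin d → ℕ) (hn : ∀ i, 0 < n i)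
    (E F : ∀ i, Fin (n i)) (hne : E ≠ F) :
    metricDim ((gridGraph n).induce
        {U | (gridGraph n).dist U E ≤ (gridGraph n).dist U F}) ≤ d ∧
    ((∀ i, (E i : ℕ) ≤ (F i : ℕ)) →
      (∀ i, (F i : ℕ) - (E i : ℕ) ≤ (F ⟨0, hd⟩ : ℕ) - (E ⟨0, hd⟩ : ℕ)) →
      (∀ j, gridCorner n hn j ∈
          {U | (gridGraph n).dist U E ≤ (gridGraph n).dist U F}) ∧
      resolves ((gridGraph n).induce
          {U | (gridGraph n).dist U E ≤ (gridGraph n).dist U F})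
        {x : {U | (gridGraph n).dist U E ≤ (gridGraph n).dist U F} |
          ∃ j, (x : ∀ i, Fin (n i)) = gridCorner n hn j} ∧
      (∀ (X : {U | (gridGraph n).dist U E ≤ (gridGraph n).dist U F}) (j : Fin d)
          (hj : gridCorner n hn j ∈
            {U | (gridGraph n).dist U E ≤ (gridGraph n).dist U F}),
        ((gridGraph n).induce
            {U | (gridGraph n).dist U E ≤ (gridGraph n).dist U F}).dist
            X ⟨gridCorner n hn j, hj⟩ =
          (gridGraph n).dist (X : ∀ i, Fin (n i)) (gridCorner n hn j))) :=
  stmt_10_general hd n hn E F
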